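/- (Equivalence of the safety verification problem and the mixed-integer feasibility problem for single-integrator dynamics.) Consider n vehicles indexed by j ∈ Fin n and m conflict areas indexed by i ∈ Fin m. Let Use(i, j) be a predicate meaning vehicle j's path crosses conflict area i; for each pair with Use(i, j), let α(i,j) < β(i,j) be the entry and exit positions of area i on j's path. For each j let 0 < u_min(j) ≤ u_max(j) be speed bounds and y0(j) an initial position with y0(j) < α(i,j) for every i used by j. Assume that for each j and any two distinct areas i, i' used by j, either β(i,j) ≤ α(i',j) or β(i',j) ≤ α(i,j) (areas along one path do not overlap). Say that area i is first on j's route if Use(i,j) and α(i,j) ≤ α(i'',j) for every i'' used by j, and that i' immediately precedes i on j's route if both are used by j, α(i',j) < α(i,j), and no i'' used by j has α(i',j) < α(i'',j) < α(i,j). Then the following are equivalent: (i) there exist admissible controls u_j (one per vehicle, with bounds u_min(j), u_max(j)) such that, writing y_j(t) = y0(j) + ∫₀ᵗ u_j, for every t ≥ 0, every area i, and every pair of distinct vehicles j ≠ j' with Use(i,j) and Use(i,j'), it is not the case that both α(i,j) < y_j(t) < β(i,j) and α(i,j') < y_{j'}(t) < β(i,j'); (ii) there exist real numbers T(i,j)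 and p(i,j), defined for all pairs with Use(i,j), such that: (A) for the first area i on j's route, (α(i,j) − y0(j))/u_max(j) ≤ T(i,j) ≤ (α(i,j) − y0(j))/u_min(j); (B) whenever i' immediately precedes i on j's route, T(i',j) + p(i',j) + (α(i,j) − β(i',j))/u_max(j) ≤ T(i,j) ≤ T(i',j) + p(i',j) + (α(i,j) − β(i',j))/u_min(j); (C) for every used pair, (β(i,j) − α(i,j))/u_max(j) ≤ p(i,j) ≤ (β(i,j) − α(i,j))/u_min(j); (D) for every area i and distinct vehicles j ≠ j' with Use(i,j) and Use(i,j'), either T(i,j) + p(i,j) ≤ T(i,j') or T(i,j') + p(i,j') ≤ T(i,j). -/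

import Mathlib

/-!
A control with speeds in `[umin, umax]`, `umin > 0`, yields a continuous, strictly increasing
trajectory, so a vehicle occupies each conflict area on its route during exactly one open
time window `(T, T + p)`, where `T` and `T + p` are the times it reaches the entry and exit
positions. Between two such waypoints the elapsed time lies between distance / `umax` and
distance / `umin`, which gives (A)–(C), and safety says precisely that windows of distinct
vehicles in the same area are disjoint, i.e. (D). Conversely, a feasible schedule is realised
by following the route area by area with constant speed on every leg between consecutive
waypoints.
-/

/-- An admissible control for speed bounds `0 < umin ≤ umax`: a measurable
function with values in `[umin, umax]` at all nonnegative times. -/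
def Admissible (umin umax : ℝ) (u : ℝ → ℝ) : Prop :=
  Measurable u ∧ ∀ s : ℝ, 0 ≤ s → umin ≤ u s ∧ u s ≤ umax

open MeasureTheory Set

noncomputable def trajectory (y0 : ℝ) (u : ℝ → ℝ) (t : ℝ) : ℝ := y0 + ∫ s in (0:ℝ)..t, u s

@[simp]
lemma trajectory_zero (y0 : ℝ) (u : ℝ → ℝ) : trajectory y0 u 0 = y0 := by
  simp [trajectory]

lemma admissible_const {umin umax : ℝ} (h : umin ≤ umax) :
    Admissible umin umax (fun _ => umin) :=
  ⟨measurable_const, fun _ _ => ⟨le_rfl, h⟩⟩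

lemma exists_mem_Icc_mul_eq {umin umax x L : ℝ} (h0 : 0 < umin) (h1 : umin ≤ umax)
    (hx : 0 ≤ x) (hL : L ∈ Icc (x / umax) (x / umin)) : ∃ v ∈ Icc umin umax, v * L = x := by
  have hmax : 0 < umax := h0.trans_le h1
  rcases (div_nonneg hx hmax.le |>.trans hL.1).eq_or_lt with rfl | hLpos
  · refine ⟨umin, left_mem_Icc.2 h1, ?_⟩
    have := (div_le_iff₀ hmax).1 hL.1
    linarith
  · refine ⟨x / L, ⟨(le_div_iff₀ hLpos).2 ?_, (div_le_iff₀ hLpos).2 ?_⟩,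
      div_mul_cancel₀ _ hLpos.ne'⟩
    · linarith [(le_div_iff₀ h0).1 hL.2]
    · linarith [(div_le_iff₀ hmax).1 hL.1]

def IsOccupancyWindow (x : ℝ → ℝ) (a b T P : ℝ) : Prop :=
  0 ≤ T ∧ 0 < P ∧ ∀ t, 0 ≤ t → (x t ∈ Ioo a b ↔ t ∈ Ioo T (T + P))

namespace Admissible

variable {umin umax : ℝ} {u : ℝ → ℝ}

lemma intervalIntegrable (hu : Admissible umin umax u) {a b : ℝ} (ha : 0 ≤ a) (hb : 0 ≤ b) :
    IntervalIntegrable u volume a b := by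
  rw [intervalIntegrable_iff]
  refine Measure.integrableOn_of_bounded (M := max |umin| |umax|) measure_Ioc_lt_top.ne
    hu.1.aestronglyMeasurable ((ae_restrict_iff' measurableSet_uIoc).2 (ae_of_all _ ?_))
  intro s hs
  have h0s : 0 ≤ s := (le_min ha hb).trans (uIoc_subset_uIcc hs).1
  exact abs_le_max_abs_abs (hu.2 s h0s).1 (hu.2 s h0s).2

lemma integral_mem_Icc (hu : Admissible umin umax u) {a b : ℝ} (ha : 0 ≤ a) (hab : a ≤ b) :
    ∫ s in a..b, u s ∈ Icc (umin * (b - a)) (umax * (b - a)) := by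
  have hint := hu.intervalIntegrable ha (ha.trans hab)
  constructor
  · simpa [mul_comm] using intervalIntegral.integral_mono_on hab intervalIntegrable_const hint
      fun s hs => (hu.2 s (ha.trans hs.1)).1
  · simpa [mul_comm] using intervalIntegral.integral_mono_on hab hint intervalIntegrable_const
      fun s hs => (hu.2 s (ha.trans hs.1)).2

lemma trajectory_sub_trajectory (hu : Admissible umin umax u) (y0 : ℝ) {a b : ℝ} (ha : 0 ≤ a)
    (hb : 0 ≤ b) : trajectory y0 u b - trajectory y0 u a = ∫ s in a..b, u s := by
  rw [trajectory, trajectory, add_sub_add_left_eq_sub,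
    intervalIntegral.integral_interval_sub_left (hu.intervalIntegrable le_rfl hb)
      (hu.intervalIntegrable le_rfl ha)]

lemma strictMonoOn_trajectory (hu : Admissible umin umax u) (h0 : 0 < umin) (y0 : ℝ) :
    StrictMonoOn (trajectory y0 u) (Ici 0) := by
  intro a ha b hb hab
  have hmin := (hu.integral_mem_Icc ha hab.le).1
  rw [← hu.trajectory_sub_trajectory y0 ha hb] at hmin
  nlinarith [mul_pos h0 (sub_pos.2 hab)]

lemma exists_trajectory_eq (hu : Admissible umin umax u) (h0 : 0 < umin) {y0 c : ℝ}
    (hc : y0 ≤ c) : ∃ t, 0 ≤ t ∧ trajectory y0 u t = c := by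
  set τ := (c - y0) / umin
  have hτ : 0 ≤ τ := div_nonneg (sub_nonneg.2 hc) h0.le
  have hcτ : c ≤ trajectory y0 u τ := by
    have hmin := (hu.integral_mem_Icc le_rfl hτ).1
    rw [← hu.trajectory_sub_trajectory y0 le_rfl hτ, trajectory_zero, sub_zero,
      mul_div_cancel₀ _ h0.ne'] at hmin
    linarith
  have hcont : ContinuousOn (trajectory y0 u) (Icc 0 τ) := by
    have := intervalIntegral.continuousOn_primitive_interval'
      (hu.intervalIntegrable le_rfl hτ) left_mem_uIcc
    rw [uIcc_of_le hτ] at this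
    exact continuousOn_const.add this
  obtain ⟨t, ht, htc⟩ := intermediate_value_Icc hτ hcont ⟨by simpa using hc, hcτ⟩
  exact ⟨t, ht.1, htc⟩

lemma travel_time_mem_Icc (hu : Admissible umin umax u) (h0 : 0 < umin) (h1 : umin ≤ umax)
    {y0 s t c c' : ℝ} (hs : 0 ≤ s) (ht : 0 ≤ t) (hc : trajectory y0 u s = c)
    (hc' : trajectory y0 u t = c') (hcc' : c ≤ c') :
    t - s ∈ Icc ((c' - c) / umax) ((c' - c) / umin) := by
  subst hc hc'
  have hst : s ≤ t := ((hu.strictMonoOn_trajectory h0 y0).le_iff_le hs ht).1 hcc'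
  have hbd := hu.integral_mem_Icc hs hst
  rw [← hu.trajectory_sub_trajectory y0 hs ht] at hbd
  exact ⟨(div_le_iff₀ (h0.trans_le h1)).2 (by linarith [hbd.2]),
    (le_div_iff₀ h0).2 (by linarith [hbd.1])⟩

lemma trajectory_mem_Ioo_iff (hu : Admissible umin umax u) (h0 : 0 < umin) {y0 a b t : ℝ}
    (ha : 0 ≤ a) (hb : 0 ≤ b) (ht : 0 ≤ t) :
    trajectory y0 u t ∈ Ioo (trajectory y0 u a) (trajectory y0 u b) ↔ t ∈ Ioo a b := by
  have hmono := hu.strictMonoOn_trajectory h0 y0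
  rw [mem_Ioo, mem_Ioo, hmono.lt_iff_lt ha ht, hmono.lt_iff_lt ht hb]

lemma piecewise {v : ℝ} (hu : Admissible umin umax u) (hv : v ∈ Icc umin umax) (τ : ℝ) :
    Admissible umin umax (fun s => if s ≤ τ then u s else v) := by
  refine ⟨hu.1.ite measurableSet_Iic measurable_const, fun s hs => ?_⟩
  dsimp only
  split_ifs
  exacts [hu.2 s hs, hv]

lemma trajectory_piecewise_of_le (v : ℝ) {y0 τ t : ℝ} (hτ : 0 ≤ τ) (ht : t ≤ τ) :
    trajectory y0 (fun s => if s ≤ τ then u s else v) t = trajectory y0 u t := by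
  refine congrArg (y0 + ·) (intervalIntegral.integral_congr fun s hs => ?_)
  exact if_pos (hs.2.trans (sup_le hτ ht))

lemma trajectory_piecewise_of_ge (hu : Admissible umin umax u) {v : ℝ} (hv : v ∈ Icc umin umax)
    {y0 τ t : ℝ} (hτ : 0 ≤ τ) (ht : τ ≤ t) :
    trajectory y0 (fun s => if s ≤ τ then u s else v) t = trajectory y0 u τ + v * (t - τ) := by
  have hpw := hu.piecewise hv τ
  have htail : ∫ s in τ..t, (if s ≤ τ then u s else v) = ∫ _ in τ..t, v :=
    intervalIntegral.integral_congr_ae (ae_of_all _ fun s hs =>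
      if_neg (not_le.2 (uIoc_of_le ht ▸ hs).1))
  rw [trajectory, ← intervalIntegral.integral_add_adjacent_intervals
      (hpw.intervalIntegrable le_rfl hτ) (hpw.intervalIntegrable hτ (hτ.trans ht)), htail,
    intervalIntegral.integral_const, smul_eq_mul, ← add_assoc, mul_comm]
  exact congrArg (· + _) (trajectory_piecewise_of_le v hτ le_rfl)

lemma exists_extend (hu : Admissible umin umax u) (h0 : 0 < umin) (h1 : umin ≤ umax)
    {y0 τ t x : ℝ} (hτ : 0 ≤ τ) (hx : 0 ≤ x)
    (hdt : t - τ ∈ Icc (x / umax) (x / umin)) :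
    ∃ u', Admissible umin umax u' ∧ (∀ s ≤ τ, trajectory y0 u' s = trajectory y0 u s) ∧
      trajectory y0 u' t = trajectory y0 u τ + x := by
  obtain ⟨v, hv, hvx⟩ := exists_mem_Icc_mul_eq h0 h1 hx hdt
  have hτt : τ ≤ t := sub_nonneg.1 ((div_nonneg hx (h0.trans_le h1).le).trans hdt.1)
  exact ⟨_, hu.piecewise hv τ, fun s hs => trajectory_piecewise_of_le v hτ hs,
    by rw [hu.trajectory_piecewise_of_ge hv hτ hτt, hvx]⟩

lemma exists_extend_through (hu : Admissible umin umax u) (h0 : 0 < umin) (h1 : umin ≤ umax)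
    {y0 τ a b T P : ℝ} (hτ : 0 ≤ τ) (hqa : trajectory y0 u τ ≤ a) (hab : a ≤ b)
    (happ : T - τ ∈ Icc ((a - trajectory y0 u τ) / umax) ((a - trajectory y0 u τ) / umin))
    (hP : P ∈ Icc ((b - a) / umax) ((b - a) / umin)) :
    ∃ u', Admissible umin umax u' ∧ (∀ s ≤ τ, trajectory y0 u' s = trajectory y0 u s) ∧
      τ ≤ T ∧ trajectory y0 u' T = a ∧ trajectory y0 u' (T + P) = b := by
  obtain ⟨u₁, hu₁, hkeep₁, hentry⟩ := hu.exists_extend (y0 := y0) h0 h1 hτ (sub_nonneg.2 hqa) happ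
  have hτT : τ ≤ T := by
    linarith [happ.1, div_nonneg (sub_nonneg.2 hqa) (h0.trans_le h1).le]
  obtain ⟨u₂, hu₂, hkeep₂, hexit⟩ := hu₁.exists_extend (y0 := y0) (t := T + P) h0 h1
    (hτ.trans hτT) (sub_nonneg.2 hab) (by simpa using hP)
  rw [add_sub_cancel] at hentry
  rw [hentry, add_sub_cancel] at hexit
  exact ⟨u₂, hu₂, fun s hs => (hkeep₂ s (hs.trans hτT)).trans (hkeep₁ s hs), hτT,
    (hkeep₂ T le_rfl).trans hentry, hexit⟩

lemma isOccupancyWindow (hu : Admissible umin umax u) (h0 : 0 < umin) {y0 a b T P : ℝ}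
    (hT : 0 ≤ T) (hP : 0 ≤ P) (hab : a < b)
    (ha : trajectory y0 u T = a) (hb : trajectory y0 u (T + P) = b) :
    IsOccupancyWindow (trajectory y0 u) a b T P := by
  refine ⟨hT, hP.lt_of_ne ?_, fun t ht => ?_⟩
  · rintro rfl
    rw [add_zero, ha] at hb
    exact hab.ne hb
  · rw [← ha, ← hb]
    exact hu.trajectory_mem_Ioo_iff h0 hT (add_nonneg hT hP) ht

end Admissible

theorem forall_not_mem_Ioo_and_mem_Ioo_iff {ι κ : Type*} {Use : ι → κ → Prop}
    {α β T P : ι → κ → ℝ} {x : κ → ℝ → ℝ}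
    (hwin : ∀ i j, Use i j → IsOccupancyWindow (x j) (α i j) (β i j) (T i j) (P i j)) :
    (∀ t, 0 ≤ t → ∀ i j j', j ≠ j' → Use i j → Use i j' →
      ¬ (x j t ∈ Ioo (α i j) (β i j) ∧ x j' t ∈ Ioo (α i j') (β i j'))) ↔
    ∀ i j j', j ≠ j' → Use i j → Use i j' → T i j + P i j ≤ T i j' ∨ T i j' + P i j' ≤ T i j := by
  constructor
  · intro hsafe i j j' hjj' h h'
    obtain ⟨hT, hP, hx⟩ := hwin i j h
    obtain ⟨hT', hP', hx'⟩ := hwin i j' h'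
    by_contra! hover
    obtain ⟨t, hlo, hhi⟩ := exists_between (max_lt (lt_min (lt_add_of_pos_right _ hP) hover.2)
      (lt_min hover.1 (lt_add_of_pos_right _ hP')))
    have ht : 0 ≤ t := hT.trans ((le_max_left _ _).trans hlo.le)
    exact hsafe t ht i j j' hjj' h h'
      ⟨(hx t ht).2 ⟨(le_max_left _ _).trans_lt hlo, hhi.trans_le (min_le_left _ _)⟩,
        (hx' t ht).2 ⟨(le_max_right _ _).trans_lt hlo, hhi.trans_le (min_le_right _ _)⟩⟩
  · rintro hD t ht i j j' hjj' h h' ⟨hin, hin'⟩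
    obtain ⟨hj₁, hj₂⟩ := ((hwin i j h).2.2 t ht).1 hin
    obtain ⟨hj'₁, hj'₂⟩ := ((hwin i j' h').2.2 t ht).1 hin'
    rcases hD i j j' hjj' h h' with hD | hD <;> linarith

section Route

variable {ι : Type*} {S : Set ι} {a b T P : ι → ℝ} {umin umax y0 : ℝ}

lemma exit_le_entry_of_lt (hab : ∀ i ∈ S, a i < b i)
    (hsep : ∀ i ∈ S, ∀ k ∈ S, i ≠ k → b i ≤ a k ∨ b k ≤ a i) {i k : ι} (hi : i ∈ S)
    (hk : k ∈ S) (h : a i < a k) : b i ≤ a k :=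
  (hsep i hi k hk (by rintro rfl; exact h.false)).resolve_right
    fun h' => (h.trans (hab k hk)).not_ge h'

theorem Admissible.exists_schedule {u : ℝ → ℝ} (hu : Admissible umin umax u) (h0 : 0 < umin)
    (h1 : umin ≤ umax) (hab : ∀ i ∈ S, a i < b i) (hy0 : ∀ i ∈ S, y0 < a i)
    (hsep : ∀ i ∈ S, ∀ k ∈ S, i ≠ k → b i ≤ a k ∨ b k ≤ a i) :
    ∃ T P : ι → ℝ,
      (∀ i ∈ S, (∀ k ∈ S, a i ≤ a k) → (a i - y0) / umax ≤ T i ∧ T i ≤ (a i - y0) / umin) ∧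
      (∀ i ∈ S, ∀ i' ∈ S, a i' < a i → (∀ k ∈ S, ¬ (a i' < a k ∧ a k < a i)) →
        T i' + P i' + (a i - b i') / umax ≤ T i ∧ T i ≤ T i' + P i' + (a i - b i') / umin) ∧
      (∀ i ∈ S, (b i - a i) / umax ≤ P i ∧ P i ≤ (b i - a i) / umin) ∧
      ∀ i ∈ S, IsOccupancyWindow (trajectory y0 u) (a i) (b i) (T i) (P i) := by
  choose! τ hτ0 hτ using fun c (hc : y0 ≤ c) => hu.exists_trajectory_eq h0 hc
  have htravel {c c' : ℝ} (hc : y0 ≤ c) (hcc' : c ≤ c') :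
      τ c' - τ c ∈ Icc ((c' - c) / umax) ((c' - c) / umin) :=
    hu.travel_time_mem_Icc h0 h1 (hτ0 c hc) (hτ0 c' (hc.trans hcc')) (hτ c hc)
      (hτ c' (hc.trans hcc')) hcc'
  have hya i (hi : i ∈ S) : y0 ≤ a i := (hy0 i hi).le
  have hyb i (hi : i ∈ S) : y0 ≤ b i := (hya i hi).trans (hab i hi).le
  refine ⟨fun i => τ (a i), fun i => τ (b i) - τ (a i), fun i hi _ => ?_,
    fun i hi i' hi' hlt _ => ?_, fun i hi => htravel (hya i hi) (hab i hi).le, fun i hi => ?_⟩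
  · simpa using hu.travel_time_mem_Icc h0 h1 le_rfl (hτ0 _ (hya i hi)) (trajectory_zero y0 u)
      (hτ _ (hya i hi)) (hya i hi)
  · have := htravel (hyb i' hi') (exit_le_entry_of_lt hab hsep hi' hi hlt)
    constructor <;> linarith [this.1, this.2]
  · have hP := (div_nonneg (sub_nonneg.2 (hab i hi).le) (h0.trans_le h1).le).trans
      (htravel (hya i hi) (hab i hi).le).1
    refine hu.isOccupancyWindow h0 (hτ0 _ (hya i hi)) hP (hab i hi) (hτ _ (hya i hi)) ?_
    rw [add_sub_cancel]
    exact hτ _ (hyb i hi)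

lemma exists_immediate_predecessor (hS : S.Finite) {i : ι} (h : {k ∈ S | a k < a i}.Nonempty) :
    ∃ i' ∈ S, a i' < a i ∧ (∀ k ∈ S, a k < a i → a k ≤ a i') ∧
      {k ∈ S | a k < a i'}.ncard < {k ∈ S | a k < a i}.ncard := by
  obtain ⟨i', ⟨hi'S, hi'i⟩, hmax⟩ := Set.exists_max_image _ a (hS.subset (Set.sep_subset _ _)) h
  refine ⟨i', hi'S, hi'i, fun k hk hki => hmax k ⟨hk, hki⟩, Set.ncard_lt_ncard ?_
    (hS.subset (Set.sep_subset _ _))⟩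
  exact ssubset_of_subset_not_superset (fun _ hk => ⟨hk.1, hk.2.trans hi'i⟩)
    fun h => (h ⟨hi'S, hi'i⟩).2.false

theorem exists_admissible_visiting_upto (h0 : 0 < umin) (h1 : umin ≤ umax) (hS : S.Finite)
    (hab : ∀ i ∈ S, a i < b i) (hy0 : ∀ i ∈ S, y0 < a i)
    (hsep : ∀ i ∈ S, ∀ k ∈ S, i ≠ k → b i ≤ a k ∨ b k ≤ a i)
    (hA : ∀ i ∈ S, (∀ k ∈ S, a i ≤ a k) → (a i - y0) / umax ≤ T i ∧ T i ≤ (a i - y0) / umin)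
    (hB : ∀ i ∈ S, ∀ i' ∈ S, a i' < a i → (∀ k ∈ S, ¬ (a i' < a k ∧ a k < a i)) →
      T i' + P i' + (a i - b i') / umax ≤ T i ∧ T i ≤ T i' + P i' + (a i - b i') / umin)
    (hC : ∀ i ∈ S, (b i - a i) / umax ≤ P i ∧ P i ≤ (b i - a i) / umin)
    {i : ι} (hi : i ∈ S) :
    ∃ u, Admissible umin umax u ∧ ∀ k ∈ S, a k ≤ a i → 0 ≤ T k ∧ T k + P k ≤ T i + P i ∧
      trajectory y0 u (T k) = a k ∧ trajectory y0 u (T k + P k) = b k := by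
  have hP : ∀ k ∈ S, 0 ≤ P k := fun k hk =>
    (div_nonneg (sub_nonneg.2 (hab k hk).le) (h0.trans_le h1).le).trans (hC k hk).1
  obtain ⟨N, hN⟩ : ∃ N, {k ∈ S | a k < a i}.ncard = N := ⟨_, rfl⟩
  induction N using Nat.strong_induction_on generalizing i with
  | _ N ih =>
  -- `τ` is the exit time from the area preceding `i` on the route, or `0` if `i` comes first.
  obtain ⟨u₀, τ, hu₀, hτ, hqa, happ, hprev⟩ : ∃ u₀ τ, Admissible umin umax u₀ ∧ 0 ≤ τ ∧
      trajectory y0 u₀ τ ≤ a i ∧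
      T i - τ ∈ Icc ((a i - trajectory y0 u₀ τ) / umax) ((a i - trajectory y0 u₀ τ) / umin) ∧
      ∀ k ∈ S, a k < a i → 0 ≤ T k ∧ T k + P k ≤ τ ∧
        trajectory y0 u₀ (T k) = a k ∧ trajectory y0 u₀ (T k + P k) = b k := by
    rcases Set.eq_empty_or_nonempty {k ∈ S | a k < a i} with hfirst | hpred
    · have hmin : ∀ k ∈ S, ¬ a k < a i := fun k hk hki =>
        (Set.eq_empty_iff_forall_notMem.1 hfirst k) ⟨hk, hki⟩
      refine ⟨fun _ => umin, 0, admissible_const h1, le_rfl, by simpa using (hy0 i hi).le,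
        by simpa using hA i hi fun k hk => not_lt.1 (hmin k hk),
        fun k hk hki => absurd hki (hmin k hk)⟩
    · obtain ⟨i', hi'S, hi'i, hmax, hcard⟩ := exists_immediate_predecessor hS hpred
      obtain ⟨u₀, hu₀, hprev⟩ := ih _ (hN ▸ hcard) hi'S rfl
      obtain ⟨hTi', -, -, hexit⟩ := hprev i' hi'S le_rfl
      have hbetween : ∀ k ∈ S, ¬ (a i' < a k ∧ a k < a i) := fun k hk hk' =>
        (hmax k hk hk'.2).not_gt hk'.1
      have hexit_le := exit_le_entry_of_lt hab hsep hi'S hi hi'i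
      obtain ⟨hB₁, hB₂⟩ := hB i hi i' hi'S hi'i hbetween
      refine ⟨u₀, T i' + P i', hu₀, by linarith [hP i' hi'S], by rwa [hexit],
        by rw [hexit]; constructor <;> linarith, fun k hk hki => hprev k hk (hmax k hk hki)⟩
  obtain ⟨u, hu, hkeep, hτT, hentry, hexit⟩ :=
    hu₀.exists_extend_through h0 h1 hτ hqa (hab i hi).le happ (hC i hi)
  refine ⟨u, hu, fun k hk hki => ?_⟩
  rcases eq_or_ne k i with rfl | hki'
  · exact ⟨hτ.trans hτT, le_rfl, hentry, hexit⟩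
  · have hlt : a k < a i := hki.lt_of_ne fun h => by
      rcases hsep k hk i hi hki' with h' | h' <;> linarith [hab k hk, hab i hi]
    obtain ⟨hTk, hexk, hYa, hYb⟩ := hprev k hk hlt
    have hPk := hP k hk
    refine ⟨hTk, by linarith [hP i hi], ?_, ?_⟩
    · rw [hkeep _ (by linarith), hYa]
    · rw [hkeep _ hexk, hYb]

theorem exists_admissible_of_schedule (h0 : 0 < umin) (h1 : umin ≤ umax) (hS : S.Finite)
    (hab : ∀ i ∈ S, a i < b i) (hy0 : ∀ i ∈ S, y0 < a i)
    (hsep : ∀ i ∈ S, ∀ k ∈ S, i ≠ k → b i ≤ a k ∨ b k ≤ a i)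
    (hA : ∀ i ∈ S, (∀ k ∈ S, a i ≤ a k) → (a i - y0) / umax ≤ T i ∧ T i ≤ (a i - y0) / umin)
    (hB : ∀ i ∈ S, ∀ i' ∈ S, a i' < a i → (∀ k ∈ S, ¬ (a i' < a k ∧ a k < a i)) →
      T i' + P i' + (a i - b i') / umax ≤ T i ∧ T i ≤ T i' + P i' + (a i - b i') / umin)
    (hC : ∀ i ∈ S, (b i - a i) / umax ≤ P i ∧ P i ≤ (b i - a i) / umin) :
    ∃ u, Admissible umin umax u ∧
      ∀ i ∈ S, IsOccupancyWindow (trajectory y0 u) (a i) (b i) (T i) (P i) := by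
  rcases S.eq_empty_or_nonempty with rfl | hne
  · exact ⟨_, admissible_const h1, by simp⟩
  obtain ⟨i, hi, hmax⟩ := Set.exists_max_image S a hS hne
  obtain ⟨u, hu, hvisit⟩ := exists_admissible_visiting_upto h0 h1 hS hab hy0 hsep hA hB hC hi
  refine ⟨u, hu, fun k hk => ?_⟩
  obtain ⟨hTk, -, hYa, hYb⟩ := hvisit k hk (hmax k hk)
  have hPk := (div_nonneg (sub_nonneg.2 (hab k hk).le) (h0.trans_le h1).le).trans (hC k hk).1
  exact hu.isOccupancyWindow h0 hTk hPk (hab k hk) hYa hYb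

end Route

/-- Equivalence of the safety verification problem and the mixed-integer
feasibility problem for single-integrator dynamics.  Vehicles `j : Fin n` cross
conflict areas `i : Fin m` (as recorded by `Use`); `α i j` and `β i j` are the
entry and exit positions of area `i` on vehicle `j`'s path.  Safety for all
future time with admissible controls is equivalent to feasibility of the
job-shop scheduling constraints (A)–(D), where `T i j` is the time vehicle `j`
enters area `i` and `p i j` the time spent inside. -/
theorem verification_iff_milp (n m : ℕ)
    (Use : Fin m → Fin n → Prop)
    (α β : Fin m → Fin n → ℝ)
    (umin umax y0 : Fin n → ℝ)
    (hb : ∀ j : Fin n, 0 < umin j ∧ umin j ≤ umax j)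
    (hαβ : ∀ i j, Use i j → α i j < β i j)
    (hy0 : ∀ i j, Use i j → y0 j < α i j)
    (hsep : ∀ j, ∀ i i' : Fin m, Use i j → Use i' j → i ≠ i' →
      β i j ≤ α i' j ∨ β i' j ≤ α i j) :
    (∃ u : Fin n → ℝ → ℝ,
      (∀ j, Admissible (umin j) (umax j) (u j)) ∧
        ∀ t : ℝ, 0 ≤ t → ∀ i : Fin m, ∀ j j' : Fin n, j ≠ j' →
          Use i j → Use i j' →
            ¬ ((α i j < y0 j + ∫ s in (0:ℝ)..t, u j s ∧
                  y0 j + ∫ s in (0:ℝ)..t, u j s < β i j) ∧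
               (α i j' < y0 j' + ∫ s in (0:ℝ)..t, u j' s ∧
                  y0 j' + ∫ s in (0:ℝ)..t, u j' s < β i j'))) ↔
    (∃ T p : Fin m → Fin n → ℝ,
      -- (A) first conflict area on j's route
      (∀ i j, Use i j → (∀ i'' : Fin m, Use i'' j → α i j ≤ α i'' j) →
        (α i j - y0 j) / umax j ≤ T i j ∧ T i j ≤ (α i j - y0 j) / umin j) ∧
      -- (B) immediate predecessor constraint
      (∀ i i' j, Use i j → Use i' j → α i' j < α i j →
        (∀ i'' : Fin m, Use i'' j → ¬ (α i' j < α i'' j ∧ α i'' j < α i j)) →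
        T i' j + p i' j + (α i j - β i' j) / umax j ≤ T i j ∧
          T i j ≤ T i' j + p i' j + (α i j - β i' j) / umin j) ∧
      -- (C) process-time bounds
      (∀ i j, Use i j →
        (β i j - α i j) / umax j ≤ p i j ∧ p i j ≤ (β i j - α i j) / umin j) ∧
      -- (D) disjunctive (collision avoidance) constraint
      (∀ i : Fin m, ∀ j j' : Fin n, j ≠ j' → Use i j → Use i j' →
        T i j + p i j ≤ T i j' ∨ T i j' + p i j' ≤ T i j)) := by
  have hsep' j : ∀ i ∈ {i | Use i j}, ∀ k ∈ {i | Use i j}, i ≠ k →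
      β i j ≤ α k j ∨ β k j ≤ α i j := fun i hi k hk => hsep j i k hi hk
  constructor
  · rintro ⟨u, hu, hsafe⟩
    choose T p hA hB hC hwin using fun j =>
      (hu j).exists_schedule (hb j).1 (hb j).2 (hαβ · j) (hy0 · j) (hsep' j)
    exact ⟨fun i j => T j i, fun i j => p j i, fun i j => hA j i,
      fun i i' j hi hi' => hB j i hi i' hi', fun i j => hC j i,
      (forall_not_mem_Ioo_and_mem_Ioo_iff fun i j => hwin j i).1 hsafe⟩
  · rintro ⟨T, p, hA, hB, hC, hD⟩
    choose u hu hwin using fun j =>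
      exists_admissible_of_schedule (T := (T · j)) (P := (p · j)) (hb j).1 (hb j).2
        (Set.toFinite _) (hαβ · j) (hy0 · j) (hsep' j) (hA · j)
        (fun i hi i' hi' => hB i i' j hi hi') (hC · j)
    exact ⟨u, hu, (forall_not_mem_Ioo_and_mem_Ioo_iff fun i j => hwin j i).2 hD⟩
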